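/- arXiv:1902.03431 — 5 statements merged into one kernel-verified Lean document; each statement's English description precedes it below -/
import Mathlib

section
/- There is no distinct DNF tautology on 3 boolean variables all of whose cubes have length at least 2. -/
abbrev Cube (n : ℕ) := Finset (Fin n) × (Fin n → Bool)

def Sat {n : ℕ} (a : Fin n → Bool) (c : Cube n) : Prop :=
  ∀ i ∈ c.1, a i = c.2 i

def DistinctDNF {n : ℕ} (D : Finset (Cube n)) : Prop :=
  ∀ c ∈ D, ∀ c' ∈ D, c.1 = c'.1 → c = c'

def Tauto {n : ℕ} (D : Finset (Cube n)) : Prop :=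
  ∀ a : Fin n → Bool, ∃ c ∈ D, Sat a c

instance {n : ℕ} (a : Fin n → Bool) (c : Cube n) : Decidable (Sat a c) :=
  inferInstanceAs (Decidable (∀ i ∈ c.1, a i = c.2 i))

set_option maxRecDepth 10000 in
lemma sumbound : ∀ T : Finset (Finset (Fin 3)), (∀ S ∈ T, 2 ≤ S.card) →
    (∑ S ∈ T, 2 ^ (3 - S.card)) ≤ 7 := by decide

lemma cubebound : ∀ c : Cube 3,
    (Finset.univ.filter (fun a => Sat a c)).card ≤ 2 ^ (3 - c.1.card) := by decide

theorem stmt2 :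
    ¬ ∃ D : Finset (Cube 3), DistinctDNF D ∧ Tauto D ∧ ∀ c ∈ D, 2 ≤ c.1.card := by
  rintro ⟨D, hdist, htauto, hlen⟩
  have hcover : (Finset.univ : Finset (Fin 3 → Bool)) ⊆
      D.biUnion (fun c => Finset.univ.filter (fun a => Sat a c)) := by
    intro a _
    obtain ⟨c, hc, hs⟩ := htauto a
    exact Finset.mem_biUnion.mpr ⟨c, hc, by simp [hs]⟩
  have h8 : (8 : ℕ) = (Finset.univ : Finset (Fin 3 → Bool)).card := by decide
  have h1 : (8 : ℕ) ≤ ∑ c ∈ D, (Finset.univ.filter (fun a => Sat a c)).card := by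
    calc (8 : ℕ) = (Finset.univ : Finset (Fin 3 → Bool)).card := h8
    _ ≤ (D.biUnion (fun c => Finset.univ.filter (fun a => Sat a c))).card :=
        Finset.card_le_card hcover
    _ ≤ ∑ c ∈ D, (Finset.univ.filter (fun a => Sat a c)).card :=
        Finset.card_biUnion_le
  have h2 : (∑ c ∈ D, (Finset.univ.filter (fun a => Sat a c)).card) ≤
      ∑ c ∈ D, 2 ^ (3 - c.1.card) :=
    Finset.sum_le_sum (fun c _ => cubebound c)
  have h3 : (∑ c ∈ D, 2 ^ (3 - c.1.card)) =
      ∑ S ∈ D.image Prod.fst, 2 ^ (3 - S.card) := by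
    rw [Finset.sum_image]
    intro c hc c' hc' h
    exact hdist c hc c' hc' h
  have h4 : (∑ S ∈ D.image Prod.fst, 2 ^ (3 - S.card)) ≤ 7 := by
    apply sumbound
    intro S hS
    obtain ⟨c, hc, rfl⟩ := Finset.mem_image.mp hS
    exact hlen c hc
  omega
end

section
/- There exists a distinct DNF tautology on 4 boolean variables all of whose cubes have length exactly 2. -/
def myD : Finset (Cube 4) :=
  { ({0,1}, ![false,false,false,false]),
    ({0,2}, ![false,false,false,false]),
    ({0,3}, ![true,false,false,false]),
    ({1,2}, ![false,true,true,false]),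
    ({1,3}, ![false,false,false,true]),
    ({2,3}, ![false,false,false,true]) }

set_option maxRecDepth 10000 in
theorem stmt3 :
    ∃ D : Finset (Cube 4), DistinctDNF D ∧ Tauto D ∧ ∀ c ∈ D, c.1.card = 2 := by
  refine ⟨myD, ?_, ?_, ?_⟩
  · unfold DistinctDNF; decide
  · unfold Tauto Sat; decide
  · decide
end

section
/- Structure of symmetric invariant distinct DNFs: Let D be a distinct DNF on n variables that is invariant under the full symmetric group acting on variable indices (for every permutation σ of Fin n and every cube (S, f) ∈ D, the cube (σ(S), f ∘ σ⁻¹) is in D, up to equality of cubes restricted to their supports). Then every cube (S, f) ∈ D with 1 ≤ |S| ≤ n − 1 is all-positive (f i = true for all i ∈ S) or all-negative (f i = false for all i ∈ S). -/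
/-- Membership of a cube in a DNF up to identification of cubes that agree on
their (common) support. -/
def MemUpTo {n : ℕ} (D : Finset (Cube n)) (c : Cube n) : Prop :=
  ∃ c' ∈ D, c'.1 = c.1 ∧ ∀ i ∈ c.1, c'.2 i = c.2 i

/-- The action of a permutation on a cube. -/
def permCube {n : ℕ} (σ : Equiv.Perm (Fin n)) (c : Cube n) : Cube n :=
  (c.1.image σ, c.2 ∘ σ.symm)

theorem stmt13 (n : ℕ) (D : Finset (Cube n)) (hdist : DistinctDNF D)
    (hinv : ∀ σ : Equiv.Perm (Fin n), ∀ c ∈ D, MemUpTo D (permCube σ c)) :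
    ∀ c ∈ D, 1 ≤ c.1.card → c.1.card ≤ n - 1 →
      (∀ i ∈ c.1, c.2 i = true) ∨ (∀ i ∈ c.1, c.2 i = false) := by
  intro c hc _ _
  by_contra h
  push_neg at h
  obtain ⟨⟨i, hi, hfi⟩, ⟨j, hj, hfj⟩⟩ := h
  replace hfi : c.2 i = false := by simpa using hfi
  replace hfj : c.2 j = true := by simpa using hfj
  have hij : i ≠ j := by rintro rfl; rw [hfi] at hfj; exact Bool.false_ne_true hfj
  set σ := Equiv.swap i j with hσ
  obtain ⟨c', hc'D, hc'1, hc'2⟩ := hinv σ c hc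
  have hmap : ∀ x ∈ c.1, σ x ∈ c.1 := by
    intro x hx
    rcases eq_or_ne x i with rfl | hxi
    · simpa [hσ] using hj
    rcases eq_or_ne x j with rfl | hxj
    · simpa [hσ] using hi
    · simpa [hσ, Equiv.swap_apply_of_ne_of_ne hxi hxj] using hx
  have himg : (permCube σ c).1 = c.1 := by
    show c.1.image σ = c.1
    ext x
    simp only [Finset.mem_image]
    constructor
    · rintro ⟨y, hy, rfl⟩; exact hmap y hy
    · intro hx
      exact ⟨σ x, hmap x hx, by simp [hσ, Equiv.swap_apply_self]⟩
  have hcc' : c' = c := hdist c' hc'D c hc (by rw [hc'1, himg])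
  have hi' : i ∈ (permCube σ c).1 := by rw [himg]; exact hi
  have := hc'2 i hi'
  rw [hcc'] at this
  have h2 : c.2 i = c.2 (σ.symm i) := this
  rw [hσ, Equiv.symm_swap, Equiv.swap_apply_left, hfi, hfj] at h2
  exact Bool.false_ne_true h2
end

section
/- Symmetric invariant existence: For all n ≥ 2 and 2 ≤ u ≤ n, and every k with 1 ≤ k ≤ min(u − 1, n/2) (floor division), there exists a distinct DNF tautology on n variables, invariant under the full symmetric group acting on variable indices, all of whose cubes have length between k and u. (One can take all all-positive cubes of length k together with all all-negative cubes of length k+1.) -/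
/-! An assignment with fewer than `k` true values has more than `n - k` false ones, so with
`k + l ≤ n + 1` it satisfies either a positive cube of length `k` or a negative cube of length
`l`. Taking `l = k + 1` needs `2k ≤ n`, and cubes of constant sign and fixed length form an
orbit-closed family under variable permutations. -/

open Finset

def constCubes (n k : ℕ) (b : Bool) : Finset (Cube n) :=
  (univ.powersetCard k).image fun S => (S, fun _ => b)

lemma mem_constCubes {n k : ℕ} {b : Bool} {c : Cube n} :
    c ∈ constCubes n k b ↔ c.1.card = k ∧ c.2 = fun _ => b := by
  constructor
  · simp only [constCubes, mem_image, mem_powersetCard, subset_univ, true_and]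
    rintro ⟨S, hS, rfl⟩
    exact ⟨hS, rfl⟩
  · rintro ⟨hk, hb⟩
    exact mem_image.2 ⟨c.1, mem_powersetCard.2 ⟨subset_univ _, hk⟩, by rw [← hb]⟩

lemma permCube_mem_constCubes {n k : ℕ} {b : Bool} (σ : Equiv.Perm (Fin n)) {c : Cube n}
    (hc : c ∈ constCubes n k b) : permCube σ c ∈ constCubes n k b := by
  obtain ⟨hk, hb⟩ := mem_constCubes.1 hc
  refine mem_constCubes.2 ⟨?_, ?_⟩
  · rw [permCube, card_image_of_injective _ σ.injective, hk]
  · rw [permCube, hb]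
    rfl

lemma memUpTo_permCube_of_forall_mem {n : ℕ} {D : Finset (Cube n)}
    (hD : ∀ σ : Equiv.Perm (Fin n), ∀ c ∈ D, permCube σ c ∈ D) (σ : Equiv.Perm (Fin n))
    {c : Cube n} (hc : c ∈ D) : MemUpTo D (permCube σ c) :=
  ⟨permCube σ c, hD σ c hc, rfl, fun _ _ => rfl⟩

lemma exists_const_subset_card_eq {n k l : ℕ} (hkl : k + l ≤ n + 1) (a : Fin n → Bool) :
    ∃ b : Bool, ∃ S : Finset (Fin n), (∀ i ∈ S, a i = b) ∧
      S.card = if b then k else l := by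
  have hsplit : #{i | a i = true} + #{i | a i = false} = n := by
    simpa using card_filter_add_card_filter_not (s := univ) (fun i => a i = true)
  by_cases htrue : k ≤ #{i | a i = true}
  · obtain ⟨S, hS, hcard⟩ := exists_subset_card_eq htrue
    exact ⟨true, S, fun i hi => (mem_filter.1 (hS hi)).2, hcard⟩
  · obtain ⟨S, hS, hcard⟩ := exists_subset_card_eq (s := {i | a i = false}) (n := l) (by omega)
    exact ⟨false, S, fun i hi => (mem_filter.1 (hS hi)).2, hcard⟩

lemma tauto_constCubes_union {n k l : ℕ} (hkl : k + l ≤ n + 1) :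
    Tauto (constCubes n k true ∪ constCubes n l false) := by
  intro a
  obtain ⟨b, S, hS, hcard⟩ := exists_const_subset_card_eq hkl a
  refine ⟨(S, fun _ => b), ?_, hS⟩
  cases b
  · exact mem_union_right _ (mem_constCubes.2 ⟨hcard, rfl⟩)
  · exact mem_union_left _ (mem_constCubes.2 ⟨hcard, rfl⟩)

lemma distinctDNF_constCubes_union {n k l : ℕ} (hkl : k ≠ l) (b b' : Bool) :
    DistinctDNF (constCubes n k b ∪ constCubes n l b') := by
  intro c hc c' hc' hS
  refine Prod.ext hS ?_
  simp only [mem_union, mem_constCubes] at hc hc'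
  rw [hS] at hc
  rcases hc with ⟨h, hb⟩ | ⟨h, hb⟩ <;> rcases hc' with ⟨h', hb'⟩ | ⟨h', hb'⟩ <;>
    first | omega | rw [hb, hb']

theorem stmt14_general (n u k : ℕ) (hu2 : 2 ≤ u)
    (hk : k ≤ min (u - 1) (n / 2)) :
    ∃ D : Finset (Cube n), DistinctDNF D ∧ Tauto D ∧
      (∀ σ : Equiv.Perm (Fin n), ∀ c ∈ D, MemUpTo D (permCube σ c)) ∧
      ∀ c ∈ D, k ≤ c.1.card ∧ c.1.card ≤ u := by
  have hku : k + 1 ≤ u := by have := hk.trans (min_le_left _ _); omega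
  have hkn : k + (k + 1) ≤ n + 1 := by have := hk.trans (min_le_right _ _); omega
  refine ⟨constCubes n k true ∪ constCubes n (k + 1) false,
    distinctDNF_constCubes_union (by omega) _ _, tauto_constCubes_union hkn, ?_, ?_⟩
  · refine fun σ c hc => memUpTo_permCube_of_forall_mem (fun σ c hc => ?_) σ hc
    rcases mem_union.1 hc with hc | hc
    · exact mem_union_left _ (permCube_mem_constCubes σ hc)
    · exact mem_union_right _ (permCube_mem_constCubes σ hc)
  · intro c hc
    rcases mem_union.1 hc with hc | hc <;> have := (mem_constCubes.1 hc).1 <;> omega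

theorem stmt14 (n u k : ℕ) (hn : 2 ≤ n) (hu2 : 2 ≤ u) (hun : u ≤ n)
    (hk1 : 1 ≤ k) (hk : k ≤ min (u - 1) (n / 2)) :
    ∃ D : Finset (Cube n), DistinctDNF D ∧ Tauto D ∧
      (∀ σ : Equiv.Perm (Fin n), ∀ c ∈ D, MemUpTo D (permCube σ c)) ∧
      ∀ c ∈ D, k ≤ c.1.card ∧ c.1.card ≤ u :=
  stmt14_general n u k hu2 hk
end

section
/- Symmetric invariant upper bound: For all n ≥ 2, 2 ≤ u ≤ n, and k ≥ 1, if there exists a distinct DNF tautology on n variables that is invariant under the full symmetric group and all of whose cubes have length between k and u, then k ≤ u − 1 and k ≤ n/2 (floor division). -/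
/-- Any two finsets of the same card in a fintype are related by a permutation. -/
lemma exists_perm_image {α : Type*} [Fintype α] [DecidableEq α] {s t : Finset α}
    (h : s.card = t.card) : ∃ σ : Equiv.Perm α, s.image σ = t := by
  have h1 : Fintype.card {x // x ∈ s} = Fintype.card {x // x ∈ t} := by
    simp [Fintype.card_coe, h]
  have h2 : Fintype.card {x // ¬ x ∈ s} = Fintype.card {x // ¬ x ∈ t} := by
    rw [Fintype.card_subtype_compl, Fintype.card_subtype_compl, h1]
  refine ⟨Equiv.subtypeCongr (Fintype.equivOfCardEq h1) (Fintype.equivOfCardEq h2), ?_⟩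
  have hsub : s.image (Equiv.subtypeCongr (Fintype.equivOfCardEq h1)
      (Fintype.equivOfCardEq h2)) ⊆ t := by
    intro x hx
    simp only [Finset.mem_image] at hx
    obtain ⟨y, hy, rfl⟩ := hx
    have : (Equiv.subtypeCongr (Fintype.equivOfCardEq h1) (Fintype.equivOfCardEq h2)) y
        = ((Fintype.equivOfCardEq h1) ⟨y, hy⟩ : {x // x ∈ t}).1 := by
      simp [Equiv.subtypeCongr, hy]
    rw [this]
    exact ((Fintype.equivOfCardEq h1) ⟨y, hy⟩).2
  apply Finset.eq_of_subset_of_card_le hsub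
  rw [Finset.card_image_of_injective _ (Equiv.injective _), h]

/-- The sign pattern of a cube in an invariant distinct DNF is constant on its support. -/
lemma aux_sign_const {n : ℕ} {D : Finset (Cube n)}
    (hdist : DistinctDNF D)
    (hinv : ∀ σ : Equiv.Perm (Fin n), ∀ c ∈ D, MemUpTo D (permCube σ c))
    {c : Cube n} (hc : c ∈ D) {i j : Fin n} (hi : i ∈ c.1) (hj : j ∈ c.1) :
    c.2 i = c.2 j := by
  obtain ⟨c', hc'D, h1, h2⟩ := hinv (Equiv.swap i j) c hc
  have himg : c.1.image (Equiv.swap i j) = c.1 := by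
    apply Finset.eq_of_subset_of_card_le
    · intro x hx
      simp only [Finset.mem_image] at hx
      obtain ⟨y, hy, rfl⟩ := hx
      rcases eq_or_ne y i with rfl | hyi
      · simpa [Equiv.swap_apply_left] using hj
      rcases eq_or_ne y j with rfl | hyj
      · simpa [Equiv.swap_apply_right] using hi
      · rwa [Equiv.swap_apply_of_ne_of_ne hyi hyj]
    · rw [Finset.card_image_of_injective _ (Equiv.injective _)]
  simp only [permCube, himg] at h1 h2
  have hcc : c' = c := hdist c' hc'D c hc h1
  subst hcc
  have h2i := h2 i hi
  simpa [Equiv.symm_swap, Equiv.swap_apply_left] using h2i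

/-- Any set of the same cardinality as a cube's support carries a cube with the same sign. -/
lemma aux_realize {n : ℕ} {D : Finset (Cube n)}
    (hdist : DistinctDNF D)
    (hinv : ∀ σ : Equiv.Perm (Fin n), ∀ c ∈ D, MemUpTo D (permCube σ c))
    {c : Cube n} (hc : c ∈ D) {b : Bool} (hb : ∀ i ∈ c.1, c.2 i = b)
    {t : Finset (Fin n)} (ht : t.card = c.1.card) :
    ∃ c' ∈ D, c'.1 = t ∧ ∀ i ∈ t, c'.2 i = b := by
  obtain ⟨σ, hσ⟩ := exists_perm_image ht.symm
  obtain ⟨c', hc'D, h1, h2⟩ := hinv σ c hc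
  simp only [permCube, hσ] at h1 h2
  refine ⟨c', hc'D, h1, fun i hi => ?_⟩
  have hmem : σ.symm i ∈ c.1 := by
    rw [← hσ] at hi
    simp only [Finset.mem_image] at hi
    obtain ⟨y, hy, rfl⟩ := hi
    simpa using hy
  rw [h2 i hi]
  exact hb _ hmem

/-- Cubes with supports of the same size have the same sign. -/
lemma aux_same_sign {n : ℕ} {D : Finset (Cube n)}
    (hdist : DistinctDNF D)
    (hinv : ∀ σ : Equiv.Perm (Fin n), ∀ c ∈ D, MemUpTo D (permCube σ c))
    {c c' : Cube n} (hc : c ∈ D) (hc' : c' ∈ D) (hcard : c.1.card = c'.1.card)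
    (hne : c'.1.Nonempty)
    {b b' : Bool} (hb : ∀ i ∈ c.1, c.2 i = b) (hb' : ∀ i ∈ c'.1, c'.2 i = b') :
    b = b' := by
  obtain ⟨c'', hc''D, h1, h2⟩ := aux_realize hdist hinv hc hb hcard.symm
  have : c'' = c' := hdist c'' hc''D c' hc' h1
  subst this
  obtain ⟨i, hi⟩ := hne
  rw [← h2 i hi, hb' i hi]

theorem stmt15 (n u k : ℕ) (hn : 2 ≤ n) (hu2 : 2 ≤ u) (hun : u ≤ n) (hk1 : 1 ≤ k)
    (h : ∃ D : Finset (Cube n), DistinctDNF D ∧ Tauto D ∧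
      (∀ σ : Equiv.Perm (Fin n), ∀ c ∈ D, MemUpTo D (permCube σ c)) ∧
      ∀ c ∈ D, k ≤ c.1.card ∧ c.1.card ≤ u) :
    k ≤ u - 1 ∧ k ≤ n / 2 := by
  obtain ⟨D, hdist, htauto, hinv, hcard⟩ := h
  -- every cube has a nonempty support and a constant sign on it
  have hsign : ∀ c ∈ D, ∃ b : Bool, ∀ i ∈ c.1, c.2 i = b := by
    intro c hc
    have hne : c.1.Nonempty := Finset.card_pos.mp (lt_of_lt_of_le hk1 (hcard c hc).1)
    obtain ⟨i, hi⟩ := hne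
    exact ⟨c.2 i, fun j hj => aux_sign_const hdist hinv hc hj hi⟩
  -- a generally useful fact: satisfying assignment has many coords of the sign
  have hcount : ∀ (a : Fin n → Bool), ∀ c ∈ D, Sat a c → ∀ b : Bool,
      (∀ i ∈ c.1, c.2 i = b) → c.1.card ≤ (Finset.univ.filter fun i => a i = b).card := by
    intro a c hc hsat b hb
    apply Finset.card_le_card
    intro i hi
    simp only [Finset.mem_filter, Finset.mem_univ, true_and]
    rw [hsat i hi]
    exact hb i hi
  constructor
  · -- k ≤ u - 1
    by_contra hcon
    push_neg at hcon
    -- then every cube has card exactly u (since k ≤ card ≤ u and k > u-1 means k ≥ u)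
    have hk : u ≤ k := by omega
    have hall : ∀ c ∈ D, c.1.card = u := by
      intro c hc
      have := hcard c hc
      omega
    -- pick any cube via tautology, all cubes have its sign
    obtain ⟨c0, hc0, _⟩ := htauto (fun _ => true)
    obtain ⟨b0, hb0⟩ := hsign c0 hc0
    obtain ⟨c, hc, hsat⟩ := htauto (fun _ => !b0)
    obtain ⟨b, hb⟩ := hsign c hc
    have hne : c.1.Nonempty := Finset.card_pos.mp (lt_of_lt_of_le hk1 (hcard c hc).1)
    have hbb : b0 = b := by
      refine aux_same_sign hdist hinv hc0 hc ?_ hne hb0 hb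
      rw [hall c0 hc0, hall c hc]
    obtain ⟨i, hi⟩ := hne
    have := hsat i hi
    rw [hb i hi, ← hbb] at this
    simp at this
  · -- k ≤ n / 2
    by_contra hcon
    push_neg at hcon
    have h2k : n < 2 * k := by omega
    -- case on whether all cubes share a sign
    by_cases hmix : ∃ ct ∈ D, ∃ cf ∈ D, (∀ i ∈ ct.1, ct.2 i = true) ∧
        (∀ i ∈ cf.1, cf.2 i = false)
    · obtain ⟨ct, hct, cf, hcf, hbt, hbf⟩ := hmix
      -- minimal sizes of true-cubes and false-cubes
      classical
      set St : Finset ℕ := (D.filter fun c => ∀ i ∈ c.1, c.2 i = true).image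
        (fun c => c.1.card) with hSt
      set Sf : Finset ℕ := (D.filter fun c => ∀ i ∈ c.1, c.2 i = false).image
        (fun c => c.1.card) with hSf
      have hStne : St.Nonempty := ⟨ct.1.card, Finset.mem_image.mpr
        ⟨ct, Finset.mem_filter.mpr ⟨hct, hbt⟩, rfl⟩⟩
      have hSfne : Sf.Nonempty := ⟨cf.1.card, Finset.mem_image.mpr
        ⟨cf, Finset.mem_filter.mpr ⟨hcf, hbf⟩, rfl⟩⟩
      set mt := St.min' hStne with hmt
      set mf := Sf.min' hSfne with hmf
      -- get cubes achieving the minima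
      obtain ⟨c1, hc1m, hc1card⟩ := Finset.mem_image.mp (St.min'_mem hStne)
      obtain ⟨c2, hc2m, hc2card⟩ := Finset.mem_image.mp (Sf.min'_mem hSfne)
      rw [Finset.mem_filter] at hc1m hc2m
      have hc1ne : c1.1.Nonempty := Finset.card_pos.mp
        (lt_of_lt_of_le hk1 (hcard c1 hc1m.1).1)
      have hc2ne : c2.1.Nonempty := Finset.card_pos.mp
        (lt_of_lt_of_le hk1 (hcard c2 hc2m.1).1)
      have hmtk : k ≤ mt := by rw [hmt, ← hc1card]; exact (hcard c1 hc1m.1).1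
      have hmfk : k ≤ mf := by rw [hmf, ← hc2card]; exact (hcard c2 hc2m.1).1
      have hmtn : mt ≤ n := by
        rw [hmt, ← hc1card]
        exact le_trans (Finset.card_le_univ _) (by simp)
      have hmtmf : mt ≠ mf := by
        intro heq
        have : true = false := by
          refine aux_same_sign hdist hinv hc1m.1 hc2m.1 ?_ hc2ne hc1m.2 hc2m.2
          rw [hc1card, hc2card, ← hmt, ← hmf, heq]
        simp at this
      -- choose a set T of size mt - 1, assignment true on T, false off T
      obtain ⟨T, _, hTcard⟩ := Finset.exists_subset_card_eq
        (show mt - 1 ≤ (Finset.univ : Finset (Fin n)).card by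
          rw [Finset.card_univ, Fintype.card_fin]; omega)
      set a : Fin n → Bool := fun i => decide (i ∈ T) with ha
      obtain ⟨c, hc, hsat⟩ := htauto a
      obtain ⟨b, hb⟩ := hsign c hc
      have hcc := hcount a c hc hsat b hb
      cases b with
      | true =>
        have hfilt : (Finset.univ.filter fun i => a i = true) = T := by
          ext i; simp [ha]
        rw [hfilt, hTcard] at hcc
        have hmem : c.1.card ∈ St := Finset.mem_image.mpr
          ⟨c, Finset.mem_filter.mpr ⟨hc, hb⟩, rfl⟩
        have := St.min'_le _ hmem
        omega
      | false =>
        have hfilt : (Finset.univ.filter fun i => a i = false) = Tᶜ := by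
          ext i; simp [ha]
        rw [hfilt, Finset.card_compl, hTcard] at hcc
        have hmem : c.1.card ∈ Sf := Finset.mem_image.mpr
          ⟨c, Finset.mem_filter.mpr ⟨hc, hb⟩, rfl⟩
        have := Sf.min'_le _ hmem
        simp only [Fintype.card_fin] at hcc
        omega
    · push_neg at hmix
      -- all cubes share one sign: the sign of some cube c0
      obtain ⟨c0, hc0, _⟩ := htauto (fun _ => true)
      obtain ⟨b0, hb0⟩ := hsign c0 hc0
      obtain ⟨c, hc, hsat⟩ := htauto (fun _ => !b0)
      obtain ⟨b, hb⟩ := hsign c hc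
      have hne : c.1.Nonempty := Finset.card_pos.mp (lt_of_lt_of_le hk1 (hcard c hc).1)
      have hne0 : c0.1.Nonempty := Finset.card_pos.mp (lt_of_lt_of_le hk1 (hcard c0 hc0).1)
      have hbb : b = b0 := by
        cases b with
        | true => cases b0 with
          | true => rfl
          | false =>
            obtain ⟨i, hi, hne'⟩ := hmix c hc c0 hc0 hb
            exact absurd (hb0 i hi) hne'
        | false => cases b0 with
          | true =>
            obtain ⟨i, hi, hne'⟩ := hmix c0 hc0 c hc hb0
            exact absurd (hb i hi) hne'
          | false => rfl
      obtain ⟨i, hi⟩ := hne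
      have := hsat i hi
      rw [hb i hi, hbb] at this
      simp at this
end
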